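/- For every nonnegative integer n and real x, sum over k from 0 to n of s(n,k) * B_k(x) equals n! times sum over k from 0 to n of binomial(x,k) * (-1)^{n-k} / (n-k+1), where B_k(x) are Bernoulli polynomials. -/

import Mathlib

/-- Unsigned Stirling numbers of the first kind. -/
def S1u : ℕ → ℕ → ℕ
  | 0, 0 => 1
  | 0, _ + 1 => 0
  | _ + 1, 0 => 0
  | n + 1, k + 1 => n * S1u n (k + 1) + S1u n k

/-- Generalized binomial coefficient `x(x-1)⋯(x-k+1)/k!` for real `x`. -/
noncomputable def genBinom (x : ℝ) (k : ℕ) : ℝ :=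
  (∏ i ∈ Finset.range k, (x - i)) / (Nat.factorial k)

/-!
Let `L : ℚ[X] → ℚ[X]` be the linear map `Xᵏ ↦ Bₖ(X)`. The recurrence
`∑_{j<k} (k choose j) Bⱼ(X) = k Xᵏ⁻¹` says exactly that `L (p(1 + X) - p(X)) = p'(X)`.
The signed Stirling numbers are the coefficients of the falling factorial `(X)ₙ`, and
`(X)ₙ₊₁(1 + X) - (X)ₙ₊₁(X) = (n + 1) (X)ₙ`, so the left-hand side is `(X)ₙ₊₁'(x) / (n + 1)`.
Differentiating `(X)ₘ₊₁ = (X)ₘ (X - m)` gives a recurrence for `(X)ₘ'(x)` that the binomial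
sum on the right-hand side satisfies as well.
-/

open Finset Polynomial

theorem S1u_eq_stirlingFirst : ∀ n k : ℕ, S1u n k = Nat.stirlingFirst n k
  | 0, 0 | 0, _ + 1 | _ + 1, 0 => rfl
  | n + 1, k + 1 => by
    rw [Nat.stirlingFirst_succ_succ, ← S1u_eq_stirlingFirst n (k + 1), ← S1u_eq_stirlingFirst n k]
    rfl

theorem coeff_descPochhammer_int (n k : ℕ) :
    (descPochhammer ℤ n).coeff k = (-1) ^ (n - k) * Nat.stirlingFirst n k := by
  induction n generalizing k with
  | zero => cases k <;> simp [coeff_one]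
  | succ n ih =>
    rw [descPochhammer_succ_right, ← C_eq_natCast]
    cases k with
    | zero => cases n <;> simp [mul_sub, ih 0]
    | succ k =>
      rw [coeff_mul_X_sub_C, ih, ih, Nat.stirlingFirst_succ_succ, Nat.add_sub_add_right]
      rcases lt_or_ge k n with hkn | hnk
      · obtain ⟨m, rfl⟩ := Nat.exists_eq_add_of_lt hkn
        rw [show k + m + 1 - k = m + 1 by omega, show k + m + 1 - (k + 1) = m by omega]
        push_cast
        ring
      · simp [Nat.stirlingFirst_eq_zero_of_lt (Nat.lt_succ_of_le hnk)]

theorem coeff_descPochhammer (R : Type*) [Ring R] (n k : ℕ) :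
    (descPochhammer R n).coeff k = (-1) ^ (n - k) * Nat.stirlingFirst n k := by
  rw [← descPochhammer_map (Int.castRingHom R), coeff_map, coeff_descPochhammer_int]
  simp

theorem descPochhammer_succ_comp_one_add_X_sub {R : Type*} [CommRing R] (n : ℕ) :
    (descPochhammer R (n + 1)).comp (1 + X) - descPochhammer R (n + 1) =
      (n + 1 : R[X]) * descPochhammer R n := by
  conv_lhs => enter [1]; rw [descPochhammer_succ_left, mul_comp, comp_assoc]
  rw [descPochhammer_succ_right, X_comp, sub_comp, X_comp, one_comp, add_sub_cancel_left, comp_X]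
  ring

noncomputable def bernoulliUmbral : ℚ[X] →ₗ[ℚ] ℚ[X] :=
  lsum fun k => LinearMap.toSpanSingleton ℚ ℚ[X] (Polynomial.bernoulli k)

theorem bernoulliUmbral_apply (p : ℚ[X]) :
    bernoulliUmbral p = p.sum fun k a => a • Polynomial.bernoulli k := rfl

theorem bernoulliUmbral_X_pow (k : ℕ) : bernoulliUmbral (X ^ k) = Polynomial.bernoulli k := by
  simp [bernoulliUmbral_apply, ← monomial_one_right_eq_X_pow]

theorem bernoulliUmbral_comp_one_add_X_sub (p : ℚ[X]) :
    bernoulliUmbral (p.comp (1 + X) - p) = derivative p := by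
  induction p using Polynomial.induction_on' with
  | add p q hp hq => rw [add_comp, add_sub_add_comm, map_add, hp, hq, derivative_add]
  | monomial k a =>
    rw [← C_mul_X_pow_eq_monomial, mul_comp, C_comp, X_pow_comp, ← mul_sub, ← smul_eq_C_mul,
      ← smul_eq_C_mul, map_smul, derivative_smul, one_add_X_pow_sub_X_pow]
    congr 1
    cases k with
    | zero => simp
    | succ m =>
      simp only [map_sum, map_nsmul, bernoulliUmbral_X_pow, derivative_X_pow]
      rw [Nat.add_sub_cancel, C_mul_X_pow_eq_monomial, Nat.cast_succ, ← Polynomial.sum_bernoulli]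
      simp only [← Nat.cast_smul_eq_nsmul ℚ]

theorem bernoulliUmbral_descPochhammer (n : ℕ) :
    (n + 1 : ℚ) • bernoulliUmbral (descPochhammer ℚ n) = derivative (descPochhammer ℚ (n + 1)) := by
  rw [← bernoulliUmbral_comp_one_add_X_sub, descPochhammer_succ_comp_one_add_X_sub, ← map_smul,
    ← C_eq_natCast, ← C_1, ← C_add, ← smul_eq_C_mul]

theorem aeval_bernoulliUmbral_descPochhammer (x : ℝ) (n : ℕ) :
    aeval x (bernoulliUmbral (descPochhammer ℚ n)) = ∑ k ∈ range (n + 1),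
      ((-1 : ℝ) ^ (n - k) * Nat.stirlingFirst n k) * aeval x (Polynomial.bernoulli k) := by
  rw [bernoulliUmbral_apply,
    sum_over_range' _ (fun _ => zero_smul ℚ (Polynomial.bernoulli _)) (n + 1) (by simp), map_sum]
  simp [coeff_descPochhammer, Rat.smul_def]

theorem sub_mul_genBinom (x : ℝ) (k : ℕ) :
    (x - k) * genBinom x k = (k + 1) * genBinom x (k + 1) := by
  simp only [genBinom, prod_range_succ, Nat.factorial_succ, Nat.cast_mul]
  field_simp
  push_cast
  ring

theorem factorial_mul_genBinom (x : ℝ) (k : ℕ) :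
    k.factorial * genBinom x k = (descPochhammer ℝ k).eval x := by
  rw [genBinom, mul_div_cancel₀ _ (by positivity), descPochhammer_eval_eq_prod_range]

theorem succ_mul_sum_genBinom (x : ℝ) (m : ℕ) :
    (m + 1) * ∑ k ∈ range (m + 1), genBinom x k * (-1) ^ (m - k) / (m + 1 - k) =
      (x - m) * ∑ k ∈ range m, genBinom x k * (-1) ^ (m - 1 - k) / (m - k) + genBinom x m := by
  set f : ℕ → ℝ := fun k => genBinom x k * (-1) ^ (m - k) / (m + 1 - k)
  -- `(m + 1) / (m + 1 - k) = 1 + k / (m + 1 - k)`, and the `k`-part is the left sum shifted by one.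
  have split_succ : ∀ k ∈ range (m + 1),
      (m + 1) * f k = k * f k + (-1) ^ (m - k) * genBinom x k := by
    intro k hk
    have : (m : ℝ) + 1 - k ≠ 0 := by
      have : (k : ℝ) ≤ m := by exact_mod_cast Nat.lt_succ_iff.mp (mem_range.mp hk)
      linarith
    simp only [f]
    field_simp
    ring
  have split_pred : ∀ k ∈ range m, (x - m) * (genBinom x k * (-1) ^ (m - 1 - k) / (m - k)) =
      (k + 1 : ℕ) * f (k + 1) + (-1) ^ (m - k) * genBinom x k := by
    intro k hk
    obtain ⟨j, rfl⟩ := Nat.exists_eq_add_of_lt (mem_range.mp hk)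
    simp only [f, show k + j + 1 - 1 - k = j by omega, show k + j + 1 - (k + 1) = j by omega,
      show k + j + 1 - k = j + 1 by omega]
    push_cast
    rw [show (k : ℝ) + j + 1 - k = j + 1 by ring, show (k : ℝ) + j + 1 + 1 - (k + 1) = j + 1 by ring]
    field_simp
    linear_combination (-1) ^ j * sub_mul_genBinom x k
  rw [mul_sum, sum_congr rfl split_succ, mul_sum, sum_congr rfl split_pred, sum_add_distrib,
    sum_add_distrib, sum_range_succ' (fun k => (k : ℝ) * f k), sum_range_succ _ m]
  simp only [CharP.cast_eq_zero, zero_mul, add_zero, Nat.sub_self, pow_zero, one_mul]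
  ring

theorem eval_derivative_descPochhammer (x : ℝ) (m : ℕ) :
    (derivative (descPochhammer ℝ m)).eval x =
      m.factorial * ∑ k ∈ range m, genBinom x k * (-1) ^ (m - 1 - k) / (m - k) := by
  induction m with
  | zero => simp
  | succ m ih =>
    rw [descPochhammer_succ_right, derivative_mul, eval_add, eval_mul, eval_mul, ih,
      ← factorial_mul_genBinom, Nat.factorial_succ, Nat.add_sub_cancel, Nat.cast_mul, mul_assoc,
      ← C_eq_natCast, derivative_sub, derivative_X, derivative_C, Nat.cast_succ]
    simp only [eval_sub, eval_X, eval_C, eval_one, sub_zero, mul_one]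
    linear_combination (m.factorial : ℝ) * (succ_mul_sum_genBinom x m).symm

theorem stirling1_bernoulli_poly_transform (n : ℕ) (x : ℝ) :
    ∑ k ∈ Finset.range (n + 1),
      ((-1 : ℝ) ^ (n - k) * S1u n k) * (Polynomial.aeval x) (Polynomial.bernoulli k) =
      (Nat.factorial n : ℝ) *
        ∑ k ∈ Finset.range (n + 1), genBinom x k * (-1) ^ (n - k) / ((n : ℝ) - k + 1) := by
  have key := congrArg (aeval x) (bernoulliUmbral_descPochhammer n)
  rw [map_smul, aeval_bernoulliUmbral_descPochhammer, ← eval_map_algebraMap, ← derivative_map,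
    descPochhammer_map, eval_derivative_descPochhammer, Nat.factorial_succ, Nat.add_sub_cancel,
    Rat.smul_def] at key
  push_cast at key
  simp only [S1u_eq_stirlingFirst]
  apply mul_left_cancel₀ (by positivity : (n : ℝ) + 1 ≠ 0)
  rw [key, mul_assoc]
  congr 2
  exact sum_congr rfl fun k _ => by ring
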